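/- Let p ∈ D[X] be monic with factorization p = ∏_i q_i into monic polynomials over D that are pairwise coprime in K[X]. Then (⋂_i D(q_i))/(p·K[X]) ≅ ∏_i D[X]/(q_i·D[X]). Moreover, D(p) = ⋂_i D(q_i) if and only if the q_i are pairwise coprime over D (i.e., q_iD[X] + q_jD[X] = D[X] for i ≠ j). -/

import Mathlib

open Polynomial

variable (D : Type*) [CommRing D] [IsDomain D]

noncomputable abbrev K := FractionRing D

/-- The pullback `D(p) = D[X] + p·K[X]` as a subring of `K[X]`. -/
noncomputable def Dp (p : D[X]) : Subring (Polynomial (K D)) where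
  carrier := {f | ∃ r : D[X], ∃ q : Polynomial (K D),
    f = r.map (algebraMap D (K D)) + p.map (algebraMap D (K D)) * q}
  zero_mem' := ⟨0, 0, by simp⟩
  one_mem' := ⟨1, 0, by simp⟩
  add_mem' := by
    rintro a b ⟨r1, q1, rfl⟩ ⟨r2, q2, rfl⟩
    exact ⟨r1 + r2, q1 + q2, by push_cast [Polynomial.map_add]; ring⟩
  mul_mem' := by
    rintro a b ⟨r1, q1, rfl⟩ ⟨r2, q2, rfl⟩
    exact ⟨r1 * r2, r1.map (algebraMap D (K D)) * q2 + q1 * (r2.map (algebraMap D (K D)))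
      + p.map (algebraMap D (K D)) * q1 * q2, by push_cast [Polynomial.map_mul]; ring⟩
  neg_mem' := by
    rintro a ⟨r, q, rfl⟩
    exact ⟨-r, -q, by push_cast [Polynomial.map_neg]; ring⟩

/-!
For monic `q`, the map `D[X] → D(q)/(q·K[X])` is onto because `D(q) = D[X] + q·K[X]`, and its
kernel is `q·D[X]` because dividing by a monic polynomial does not leave `D[X]`; hence
`D(q)/(q·K[X]) ≅ D[X]/(q)`. On `⋂ i, D(q i)` the resulting maps to the `D[X]/(q i)` are jointly
surjective by the Chinese remainder theorem in `K[X]`, and their common kernel is `p·K[X]` since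
coprime divisors of `f` multiply to a divisor of `f`.

For the second part, `D(p) ⊆ ⋂ i, D(q i)` always. If equality holds, the element of
`⋂ i, D(q i)` that is `1` modulo `q i` and `0` modulo `q j` is `a + p·h` with `a ∈ D[X]`,
and `a` witnesses that `q i` and `q j` are coprime over `D`. Conversely, the Chinese remainder
theorem in `D[X]` glues the `D[X]`-parts of an element of `⋂ i, D(q i)` into a single one.
-/

open Function

section

variable {R : Type*} [CommRing R]

theorem exists_forall_dvd_sub_of_pairwise_isCoprime {ι : Type*} [Finite ι] {a : ι → R}
    (hco : Pairwise (IsCoprime on a)) (r : ι → R) : ∃ x, ∀ i, a i ∣ x - r i := by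
  obtain ⟨x, hx⟩ := Ideal.exists_forall_sub_mem_ideal
    (I := fun i => Ideal.span {a i})
    (fun i j hij => (Ideal.isCoprime_span_singleton_iff _ _).mpr (hco hij)) r
  exact ⟨x, fun i => Ideal.mem_span_singleton.mp (hx i)⟩

theorem Polynomial.Monic.map_dvd_map_fractionRing_iff {g f : R[X]} (hg : g.Monic) :
    g.map (algebraMap R (K R)) ∣ f.map (algebraMap R (K R)) ↔ g ∣ f :=
  map_dvd_map _ (IsFractionRing.injective R (K R)) hg

theorem mem_Dp_iff {g : R[X]} {f : (K R)[X]} :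
    f ∈ Dp R g ↔
      ∃ r : R[X], g.map (algebraMap R (K R)) ∣ f - r.map (algebraMap R (K R)) := by
  constructor
  · rintro ⟨r, b, rfl⟩
    exact ⟨r, b, by ring⟩
  · rintro ⟨r, b, hb⟩
    exact ⟨r, b, by linear_combination hb⟩

theorem Dp_le_Dp_of_dvd {g h : R[X]} (hgh : g ∣ h) : Dp R h ≤ Dp R g := by
  rintro f ⟨r, b, rfl⟩
  obtain ⟨c, rfl⟩ := hgh
  exact ⟨r, c.map (algebraMap R (K R)) * b, by rw [Polynomial.map_mul]; ring⟩

end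

namespace Dp

variable {R : Type*} [CommRing R] (g : R[X])

noncomputable def ofPolynomial : R[X] →+* Dp R g :=
  (mapRingHom (algebraMap R (K R))).codRestrict _ fun r => ⟨r, 0, by simp⟩

@[simp]
theorem coe_ofPolynomial (r : R[X]) : (ofPolynomial g r : (K R)[X]) = r.map (algebraMap R (K R)) :=
  rfl

theorem mk_comp_ofPolynomial_surjective :
    Surjective ((Ideal.Quotient.mk ((Ideal.span {g.map (algebraMap R (K R))}).comap
      (Dp R g).subtype)).comp (ofPolynomial g)) := by
  intro y
  obtain ⟨⟨_, r, b, rfl⟩, rfl⟩ := Ideal.Quotient.mk_surjective y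
  refine ⟨r, (Ideal.Quotient.eq.mpr ?_).symm⟩
  rw [Ideal.mem_comap, Ideal.mem_span_singleton]
  exact ⟨b, by simp⟩

variable {g}

theorem ker_mk_comp_ofPolynomial (hg : g.Monic) :
    RingHom.ker ((Ideal.Quotient.mk ((Ideal.span {g.map (algebraMap R (K R))}).comap
      (Dp R g).subtype)).comp (ofPolynomial g)) = Ideal.span {g} := by
  ext r
  rw [RingHom.mem_ker, RingHom.comp_apply, Ideal.Quotient.eq_zero_iff_mem, Ideal.mem_comap,
    Ideal.mem_span_singleton, Ideal.mem_span_singleton, ← hg.map_dvd_map_fractionRing_iff]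
  rfl

noncomputable def quotientEquiv (hg : g.Monic) :
    Dp R g ⧸ (Ideal.span {g.map (algebraMap R (K R))}).comap (Dp R g).subtype ≃+*
      R[X] ⧸ Ideal.span {g} :=
  ((Ideal.quotEquivOfEq (ker_mk_comp_ofPolynomial hg)).symm.trans
    (RingHom.quotientKerEquivOfSurjective (mk_comp_ofPolynomial_surjective g))).symm

noncomputable def toQuotient (hg : g.Monic) : Dp R g →+* R[X] ⧸ Ideal.span {g} :=
  (quotientEquiv hg).toRingHom.comp (Ideal.Quotient.mk _)

theorem toQuotient_eq_mk_iff (hg : g.Monic) (f : Dp R g) (r : R[X]) :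
    toQuotient hg f = Ideal.Quotient.mk _ r ↔
      g.map (algebraMap R (K R)) ∣ (f : (K R)[X]) - r.map (algebraMap R (K R)) := by
  rw [toQuotient, RingHom.comp_apply, RingEquiv.toRingHom_eq_coe, RingEquiv.coe_toRingHom,
    quotientEquiv, RingEquiv.symm_apply_eq]
  simp only [RingEquiv.trans_apply, Ideal.quotEquivOfEq_symm,
    Ideal.quotEquivOfEq_mk, RingHom.quotientKerEquivOfSurjective_apply_mk, RingHom.comp_apply]
  rw [Ideal.Quotient.eq, Ideal.mem_comap, Ideal.mem_span_singleton]
  rfl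

end Dp

section iInf

variable {R : Type*} [CommRing R] {ι : Type*} {q : ι → R[X]}

theorem exists_mem_iInf_Dp [Finite ι]
    (hco : Pairwise (IsCoprime on fun i => (q i).map (algebraMap R (K R)))) (r : ι → R[X]) :
    ∃ f ∈ ⨅ i, Dp R (q i),
      ∀ i, (q i).map (algebraMap R (K R)) ∣ f - (r i).map (algebraMap R (K R)) := by
  obtain ⟨f, hf⟩ :=
    exists_forall_dvd_sub_of_pairwise_isCoprime hco fun i => (r i).map (algebraMap R (K R))
  exact ⟨f, Subring.mem_iInf.mpr fun i => mem_Dp_iff.mpr ⟨r i, hf i⟩, hf⟩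

theorem map_prod_dvd_of_forall_dvd [Fintype ι]
    (hco : Pairwise (IsCoprime on fun i => (q i).map (algebraMap R (K R)))) {f : (K R)[X]}
    (hf : ∀ i, (q i).map (algebraMap R (K R)) ∣ f) :
    (∏ i, q i).map (algebraMap R (K R)) ∣ f := by
  rw [Polynomial.map_prod]
  exact Fintype.prod_dvd_of_coprime hco hf

variable (hq : ∀ i, (q i).Monic)

noncomputable def iInfDpToPi : ↥(⨅ i, Dp R (q i)) →+* ∀ i, R[X] ⧸ Ideal.span {q i} :=
  RingHom.pi fun i => (Dp.toQuotient (hq i)).comp (Subring.inclusion (iInf_le _ i))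

theorem iInfDpToPi_apply_eq_mk_iff (f : ↥(⨅ i, Dp R (q i))) (i : ι) (r : R[X]) :
    iInfDpToPi hq f i = Ideal.Quotient.mk _ r ↔
      (q i).map (algebraMap R (K R)) ∣ (f : (K R)[X]) - r.map (algebraMap R (K R)) :=
  Dp.toQuotient_eq_mk_iff (hq i) _ r

theorem iInfDpToPi_surjective [Finite ι]
    (hco : Pairwise (IsCoprime on fun i => (q i).map (algebraMap R (K R)))) :
    Surjective (iInfDpToPi hq) := by
  intro y
  choose r hr using fun i => Ideal.Quotient.mk_surjective (y i)
  obtain ⟨f, hf, hfr⟩ := exists_mem_iInf_Dp hco r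
  refine ⟨⟨f, hf⟩, funext fun i => ?_⟩
  rw [← hr i]
  exact (iInfDpToPi_apply_eq_mk_iff hq _ i (r i)).mpr (hfr i)

theorem ker_iInfDpToPi [Fintype ι]
    (hco : Pairwise (IsCoprime on fun i => (q i).map (algebraMap R (K R)))) :
    RingHom.ker (iInfDpToPi hq) =
      (Ideal.span {(∏ i, q i).map (algebraMap R (K R))}).comap (⨅ i, Dp R (q i)).subtype := by
  ext f
  rw [RingHom.mem_ker, Ideal.mem_comap, Ideal.mem_span_singleton, funext_iff]
  simp only [Pi.zero_apply, ← map_zero (Ideal.Quotient.mk _), iInfDpToPi_apply_eq_mk_iff,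
    Polynomial.map_zero, sub_zero, Subring.coe_subtype]
  exact ⟨map_prod_dvd_of_forall_dvd hco, fun h i =>
    (Polynomial.map_dvd _ (Finset.dvd_prod_of_mem q (Finset.mem_univ i))).trans h⟩

noncomputable def iInfDpQuotientEquiv [Fintype ι]
    (hco : Pairwise (IsCoprime on fun i => (q i).map (algebraMap R (K R)))) :
    ↥(⨅ i, Dp R (q i)) ⧸
        (Ideal.span {(∏ i, q i).map (algebraMap R (K R))}).comap (⨅ i, Dp R (q i)).subtype ≃+*
      ∀ i, R[X] ⧸ Ideal.span {q i} :=
  (Ideal.quotEquivOfEq (ker_iInfDpToPi hq hco).symm).trans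
    (RingHom.quotientKerEquivOfSurjective (iInfDpToPi_surjective hq hco))

end iInf

section Coprime

variable {R : Type*} [CommRing R]

theorem isCoprime_of_mem_Dp {a b g : R[X]} (ha : a.Monic) (hb : b.Monic) (hag : a ∣ g)
    (hbg : b ∣ g) {f : (K R)[X]} (hf : f ∈ Dp R g)
    (hfa : a.map (algebraMap R (K R)) ∣ f - 1) (hfb : b.map (algebraMap R (K R)) ∣ f) :
    IsCoprime a b := by
  obtain ⟨s, hs⟩ := mem_Dp_iff.mp hf
  have has : a ∣ s - 1 := by
    rw [← ha.map_dvd_map_fractionRing_iff, Polynomial.map_sub, Polynomial.map_one,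
      show s.map (algebraMap R (K R)) - 1 = (f - 1) - (f - s.map (algebraMap R (K R))) by ring]
    exact dvd_sub hfa ((Polynomial.map_dvd _ hag).trans hs)
  have hbs : b ∣ s := by
    rw [← hb.map_dvd_map_fractionRing_iff,
      show s.map (algebraMap R (K R)) = f - (f - s.map (algebraMap R (K R))) by ring]
    exact dvd_sub hfb ((Polynomial.map_dvd _ hbg).trans hs)
  obtain ⟨u, hu⟩ := has
  obtain ⟨v, hv⟩ := hbs
  exact ⟨-u, v, by linear_combination hu - hv⟩

variable {ι : Type*} [Fintype ι] {q : ι → R[X]}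

theorem Dp_prod_le_iInf_Dp : Dp R (∏ i, q i) ≤ ⨅ i, Dp R (q i) :=
  le_iInf fun i => Dp_le_Dp_of_dvd (Finset.dvd_prod_of_mem q (Finset.mem_univ i))

theorem pairwise_isCoprime_of_Dp_prod_eq_iInf [DecidableEq ι] (hq : ∀ i, (q i).Monic)
    (hco : Pairwise (IsCoprime on fun i => (q i).map (algebraMap R (K R))))
    (h : Dp R (∏ i, q i) = ⨅ i, Dp R (q i)) : Pairwise (IsCoprime on q) := by
  intro i j hij
  obtain ⟨f, hf, hfr⟩ := exists_mem_iInf_Dp hco (Pi.single i 1)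
  exact isCoprime_of_mem_Dp (hq i) (hq j) (Finset.dvd_prod_of_mem q (Finset.mem_univ i))
    (Finset.dvd_prod_of_mem q (Finset.mem_univ j)) (h ▸ hf) (by simpa using hfr i)
    (by simpa [hij.symm] using hfr j)

theorem iInf_Dp_le_Dp_prod (hco : Pairwise (IsCoprime on q)) :
    ⨅ i, Dp R (q i) ≤ Dp R (∏ i, q i) := by
  intro f hf
  choose r hr using fun i => mem_Dp_iff.mp (Subring.mem_iInf.mp hf i)
  obtain ⟨a, ha⟩ := exists_forall_dvd_sub_of_pairwise_isCoprime hco r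
  refine mem_Dp_iff.mpr ⟨a, map_prod_dvd_of_forall_dvd
    (fun i j hij => (hco hij).map (mapRingHom (algebraMap R (K R)))) fun i => ?_⟩
  have hai : (q i).map (algebraMap R (K R)) ∣ (a - r i).map (algebraMap R (K R)) :=
    Polynomial.map_dvd _ (ha i)
  rw [Polynomial.map_sub] at hai
  rw [show f - a.map (algebraMap R (K R)) = (f - (r i).map (algebraMap R (K R))) -
    (a.map (algebraMap R (K R)) - (r i).map (algebraMap R (K R))) by ring]
  exact dvd_sub (hr i) hai

end Coprime

theorem iInf_Dp_quotient_iso {ι : Type*} [Fintype ι] (q : ι → D[X])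
    (hq : ∀ i, (q i).Monic)
    (hco : ∀ i j, i ≠ j →
      IsCoprime ((q i).map (algebraMap D (K D))) ((q j).map (algebraMap D (K D))))
    (p : D[X]) (hp : p = ∏ i, q i) :
    Nonempty ((↥(⨅ i, Dp D (q i)) ⧸
        (Ideal.span {p.map (algebraMap D (K D))}).comap (⨅ i, Dp D (q i)).subtype) ≃+*
      ∀ i, D[X] ⧸ Ideal.span {q i}) ∧
    (Dp D p = ⨅ i, Dp D (q i) ↔ ∀ i j, i ≠ j → IsCoprime (q i) (q j)) := by
  classical
  subst hp
  exact ⟨⟨iInfDpQuotientEquiv hq hco⟩, pairwise_isCoprime_of_Dp_prod_eq_iInf hq hco,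
    fun h => le_antisymm Dp_prod_le_iInf_Dp (iInf_Dp_le_Dp_prod h)⟩
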